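/- There is an involution-like bijection Ω_n from the set φ({NE,D}^n) = ∪_{γ∈{NE,D}^n} φ(γ) onto itself such that area(γ) = bounce(Ω_n(γ)) and bounce(γ) = area(Ω_n(γ)) for all γ in this set. -/

import Mathlib

open scoped Classical

inductive Step : Type
  | N | E | D
deriving DecidableEq, Repr

instance : Fintype Step :=
  ⟨{Step.N, Step.E, Step.D}, by intro x; cases x <;> simp⟩

open Step

/-- number of occurrences of the letter `s` in the word `w` -/
def cnt (s : Step) (w : List Step) : ℕ := w.count s

/-- Schröder (or Dyck, if no `D`s) path in an `n × n` grid: every prefix has at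
least as many `N`s as `E`s, and the totals agree. -/
def IsSchroeder (w : List Step) : Prop :=
  (∀ p : List Step, p <+: w → cnt E p ≤ cnt N p) ∧ cnt N w = cnt E w

/-- words that are concatenations of blocks `NE` and `D` -/
inductive IsNED : List Step → Prop
  | nil : IsNED []
  | ne {w} : IsNED w → IsNED (N :: E :: w)
  | d {w} : IsNED w → IsNED (D :: w)

/-- area of a Schröder path: the number of lower triangles between the path and the
main diagonal, computed as the sum over `N` and `D` steps of the height
`#N - #E` of the starting point of the step above the diagonal. -/
def areaAux : ℕ → List Step → ℕ
  | _, [] => 0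
  | h, N :: w => h + areaAux (h+1) w
  | h, D :: w => h + areaAux h w
  | h, E :: w => areaAux (h-1) w

def area (w : List Step) : ℕ := areaAux 0 w

/-- area of an `N/E` lattice path in a rectangular grid: the number of boxes under
the path, i.e. the sum over `E` steps of the number of `N` steps before it. -/
def areaNEAux : ℕ → List Step → ℕ
  | _, [] => 0
  | h, N :: w => areaNEAux (h+1) w
  | h, E :: w => h + areaNEAux h w
  | h, D :: w => areaNEAux h w

def areaNE (w : List Step) : ℕ := areaNEAux 0 w

/-- number of `N`s occurring before the `(j+1)`-st `E` (`j` is 0-indexed);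
this is the height of the path above the horizontal interval `[j, j+1]`. -/
def nBefore : List Step → ℕ → ℕ
  | [], _ => 0
  | N :: w, j => 1 + nBefore w j
  | E :: w, j => if j = 0 then 0 else nBefore w (j-1)
  | D :: w, j => nBefore w j

/-- number of `E`s occurring before the `(i+1)`-st `N` (`i` is 0-indexed). -/
def eBefore : List Step → ℕ → ℕ
  | [], _ => 0
  | E :: w, i => 1 + eBefore w i
  | N :: w, i => if i = 0 then 0 else eBefore w (i-1)
  | D :: w, i => eBefore w i

/-- number of `D`s occurring after the `e`-th `E` (`e` is 1-indexed). -/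
def dAfterE : List Step → ℕ → ℕ
  | [], _ => 0
  | E :: w, e => if e ≤ 1 then cnt D w else dAfterE w (e-1)
  | D :: w, e => dAfterE w e
  | N :: w, e => dAfterE w e

/-- Combined computation of `bounce(Γ(γ)) + numph(γ)` along the bounce path of
`Γ(γ)`.  Here `g` is the Schröder path, `w = Γ(g)` is the underlying Dyck path,
`nn` its size; the bounce path has corners (peaks) at the positions
`j₀ = 0, jₖ₊₁ = nBefore w jₖ`; each intermediate return `jₖ₊₁ < nn` contributes
`nn - jₖ₊₁` to the bounce of `Γ(g)`, and the peak with corner at `jₖ` is the start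
of the `(jₖ+1)`-st east step, contributing to numph the number of diagonal steps of
`g` above it, i.e. after that east step. -/
def bounceAux (g w : List Step) (nn : ℕ) : ℕ → ℕ → ℕ
  | 0, _ => 0
  | fuel+1, j =>
      dAfterE g (j+1) +
        (if nn ≤ nBefore w j ∨ nBefore w j ≤ j then 0
         else (nn - nBefore w j) + bounceAux g w nn fuel (nBefore w j))

/-- the bounce statistic of a Schröder path: `bounce(Γ(γ)) + numph(γ)` -/
def bounce (g : List Step) : ℕ :=
  let w := g.filter (fun s => s ≠ D)
  let nn := cnt E w
  if nn = 0 then 0 else bounceAux g w nn g.length 0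

/-- the (signed) area coordinate `a_i = m·i - (#E before the (i+1)-st N)` of line `i`
(0-indexed) for a path in an `n × mn` grid. -/
def aLine (m : ℕ) (g : List Step) (i : ℕ) : ℤ := (m : ℤ) * i - eBefore g i

/-- an `(n, mn)`-Dyck path: `n` north steps, `mn` east steps, no diagonal steps,
staying weakly above the main diagonal. -/
def IsParkingPath (n m : ℕ) (g : List Step) : Prop :=
  (∀ s ∈ g, s ≠ D) ∧ cnt N g = n ∧ cnt E g = m * n ∧
    ∀ p : List Step, p <+: g → cnt E p ≤ m * cnt N p

/-- an `(n, mn)`-parking function: an `(n,mn)`-Dyck path labelled by a permutation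
`w` of `{0, …, n-1}` whose labels increase within each column. -/
def IsParking (n m : ℕ) (g : List Step) (w : Fin n → Fin n) : Prop :=
  IsParkingPath n m g ∧ Function.Bijective w ∧
    ∀ i j : Fin n, (j : ℕ) = (i : ℕ) + 1 → eBefore g (i : ℕ) = eBefore g (j : ℕ) → w i < w j

/-- the diagonal inversion statistic of an `(n, mn)`-parking function -/
def dinv (n m : ℕ) (g : List Step) (w : Fin n → Fin n) : ℤ :=
  ∑ i : Fin n, ∑ j : Fin n,
    if (i : ℕ) < (j : ℕ) then
      (if w i < w j then max 0 ((m : ℤ) - |aLine m g (i : ℕ) - aLine m g (j : ℕ)|) else 0) +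
        (if w j < w i then max 0 ((m : ℤ) - |aLine m g (j : ℕ) - aLine m g (i : ℕ) + 1|) else 0)
    else 0

/-- the number of descents of the word `w` -/
def desNum (n : ℕ) (w : Fin n → Fin n) : ℕ :=
  ((Finset.range (n-1)).filter fun i =>
    ∃ hj : i + 1 < n, w ⟨i+1, hj⟩ < w ⟨i, Nat.lt_of_succ_lt hj⟩).card

/-- the major index of the word `w` (with positions 1-indexed as usual) -/
def majStat (n : ℕ) (w : Fin n → Fin n) : ℕ :=
  ∑ i ∈ (Finset.range (n-1)).filter (fun i =>
    ∃ hj : i + 1 < n, w ⟨i+1, hj⟩ < w ⟨i, Nat.lt_of_succ_lt hj⟩), (i+1)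

/-- the reading word of a labelled path in an `n × mn` grid: labels are read along
diagonals parallel to the main diagonal, starting with the farthest diagonal,
each diagonal being read from top-right to bottom-left. -/
def readWord (n m : ℕ) (g : List Step) (lab : ℕ → ℕ) : List ℕ :=
  ((List.range (m * n + 1)).map fun k =>
    (((List.range n).reverse.filter fun i => aLine m g i = (m * n : ℤ) - k).map lab)).flatten

/-- the labelling function `ℕ → ℕ` associated to a permutation of `Fin n` -/
def labOf {n : ℕ} (w : Fin n → Fin n) : ℕ → ℕ :=
  fun i => if h : i < n then (w ⟨i, h⟩ : ℕ) else 0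

/-- one step of the algorithm `φ`, on the reversed word: find the rightmost
(i.e. first in the reversed word) east step not followed by an east step,
and swap it with the letter following it. -/
def phiRevAux : List Step → List Step
  | a :: E :: t => if a ≠ E then E :: a :: t else a :: phiRevAux (E :: t)
  | a :: t => a :: phiRevAux t
  | [] => []

/-- one step of the algorithm `φ` -/
def phiStep (w : List Step) : List Step := (phiRevAux w.reverse).reverse

/-- the sequence `φ(γ) = (γ₀, γ₁, …, γ_{bounce γ})` produced by the algorithm -/
def phiSeq (g : List Step) : List (List Step) :=
  (List.range (bounce g + 1)).map fun i => phiStep^[i] g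

/-- the union of all sequences `φ(γ)` over area-0 Schröder paths with `n` blocks -/
def phiUniv (n : ℕ) : Set (List Step) :=
  {p | ∃ g, IsNED g ∧ cnt N g + cnt D g = n ∧ p ∈ phiSeq g}

/-- the map replacing each block `NE` by `N` and each `D` by `E` -/
def theta : List Step → List Step
  | N :: E :: w => N :: theta w
  | D :: w => E :: theta w
  | _ :: w => theta w
  | [] => []

/-- the cells of the hook-shaped Young diagram `(d, 1^{n-d})` (row 0 is the arm). -/
def hookCells (n d : ℕ) : Finset (ℕ × ℕ) :=
  ((Finset.range d).image fun c => ((0 : ℕ), c)) ∪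
    ((Finset.range (n - d + 1)).image fun r => (r, (0 : ℕ)))

/-- a standard Young tableau of hook shape `(d, 1^{n-d})`: `pos i` is the cell
`(row, column)` containing the entry `i+1`; entries increase along rows and columns. -/
structure HookSYT (n d : ℕ) where
  pos : Fin n → ℕ × ℕ
  mem : ∀ i, pos i ∈ hookCells n d
  inj : Function.Injective pos
  rowInc : ∀ i j : Fin n, (pos i).1 = (pos j).1 → (pos i).2 < (pos j).2 → i < j
  colInc : ∀ i j : Fin n, (pos i).2 = (pos j).2 → (pos i).1 < (pos j).1 → i < j

/-- the descent set of a standard Young tableau: entries `i ∈ {1, …, n-1}` such that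
the entry `i+1` lies in a strictly higher row than `i`. -/
def Des {n d : ℕ} (τ : HookSYT n d) : Finset ℕ :=
  (Finset.Icc 1 (n-1)).filter fun i =>
    ∃ hi : i < n, ∃ hi' : i - 1 < n, (τ.pos ⟨i - 1, hi'⟩).1 < (τ.pos ⟨i, hi⟩).1

/-- the major index of a standard Young tableau -/
def majT {n d : ℕ} (τ : HookSYT n d) : ℕ := ∑ i ∈ Des τ, i

/-- the number of descents of a standard Young tableau -/
def desT {n d : ℕ} (τ : HookSYT n d) : ℕ := (Des τ).card

/-- the maximum of the descent set -/
def maxDes {n d : ℕ} (τ : HookSYT n d) : ℕ := (Des τ).sup id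

/-- the map `M_{n,d}`: the path `γ₁γ₂⋯γₙ` with `γₙ = NE`, `γ_{n-i} = NE` if
`i ∈ Des τ` and `γ_{n-i} = D` otherwise -/
def Mmap (n d : ℕ) (τ : HookSYT n d) : List Step :=
  (((List.range n).map fun j =>
    if j = n - 1 then [N, E]
    else if (n - 1 - j) ∈ Des τ then [N, E] else [D])).flatten

/-- the map `S_{n,d}`: the path `γ₁⋯γ_{n-1}` with `γ_{n-i} = NNEE` if
`i = max Des τ` and `1 ∈ Des τ`, `γ_{n-i} = NDE` if `i = max Des τ` and
`1 ∉ Des τ`, `γ_{n-i} = NE` if `i = 1` or `i ∈ Des τ ∖ {max Des τ}`, and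
`γ_{n-i} = D` otherwise. -/
def Smap (n d : ℕ) (τ : HookSYT n d) : List Step :=
  (((List.range (n-1)).map fun j =>
    if (n - 1 - j) = maxDes τ then (if 1 ∈ Des τ then [N,N,E,E] else [N,D,E])
    else if (n - 1 - j) = 1 ∨ (n - 1 - j) ∈ Des τ then [N,E] else [D])).flatten

/-- the set `V_{n,d}` of Schröder paths of the form `Dʲ NNEE u` or `Dʲ NDE u`
with `u ∈ {NE,D}* NE`, having `n-d+1` north steps and `d-1` diagonal steps. -/
def Vset (n d : ℕ) : Set (List Step) :=
  {g | (∃ j u, IsNED u ∧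
      (g = List.replicate j D ++ [N,N,E,E] ++ (u ++ [N,E]) ∨
       g = List.replicate j D ++ [N,D,E] ++ (u ++ [N,E]))) ∧
     cnt N g = n - d + 1 ∧ cnt D g = d - 1}

/-- Schröder paths in an `n × n` grid with `dd` diagonal steps, area `a`,
ending with `NE` -/
def SchT (n dd a : ℕ) : Set (List Step) :=
  {g | IsSchroeder g ∧ cnt D g = dd ∧ cnt N g = n - dd ∧ area g = a ∧ ∃ u, g = u ++ [N, E]}

/-- the 'upper' forms: `Dʲ NNEE γ' NE NE` or `γ' NE Dʲ NNEE γ''` -/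
def UpperForm (g : List Step) : Prop :=
  (∃ j u, IsNED u ∧ g = List.replicate j D ++ [N,N,E,E] ++ u ++ [N,E,N,E]) ∨
  (∃ u j v, IsNED u ∧ g = u ++ [N,E] ++ List.replicate j D ++ [N,N,E,E] ++ v)

/-- the 'lower' forms: `Dʲ NNEE γ' D NE` or `γ' NDE Dʲ NE γ''` -/
def LowerForm (g : List Step) : Prop :=
  (∃ j u, IsNED u ∧ g = List.replicate j D ++ [N,N,E,E] ++ u ++ [D,N,E]) ∨
  (∃ u j v, IsNED u ∧ g = u ++ [N,D,E] ++ List.replicate j D ++ [N,E] ++ v)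

/-- the number of distinct columns of the path -/
def Tcols (n : ℕ) (g : List Step) : ℕ :=
  ((Finset.range n).image fun i => eBefore g i).card

/-- the `q`-integer `[k]_q = 1 + q + ⋯ + q^{k-1}` as a polynomial -/
noncomputable def qInt (k : ℕ) : Polynomial ℤ := ∑ i ∈ Finset.range k, Polynomial.X ^ i

/-- the `q`-factorial `[k]!_q` -/
noncomputable def qFact (k : ℕ) : Polynomial ℤ := ∏ i ∈ Finset.range k, qInt (i+1)


/-! Every word of a `φ`-sequence starting at `γ₀ ∈ {NE,D}ⁿ` has the form `G · N S E S' Eʳ`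
(`chainWord`), and a step of `φ` moves the distinguished `E` past the first letter of `S'`;
once `S'` is used up, the `E` of the last block `NE` of `G` takes over. Each such move
adds one lower triangle, since the `E` stays strictly above the diagonal, and lowers the
bounce by one: the blocks of `G` contribute amounts depending only on letter counts of
the rest of the word, and the tail `N S E S' Eʳ` contributes `|S'|`. So `γᵢ` has area `i`
and bounce `bounce γ₀ - i`; as `φ` only moves `E`s, `γ₀` is recovered from any `γᵢ`, and
`γᵢ ↦ γ_{bounce γᵢ}` is an involution of each sequence exchanging the two statistics. -/

open List

lemma phiRevAux_cons_E (t : List Step) : phiRevAux (E :: t) = E :: phiRevAux t := by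
  rcases t with _ | ⟨a, t⟩
  · rfl
  · cases a <;> simp [phiRevAux]

lemma phiRevAux_replicate_E_append (r : ℕ) (z : List Step) :
    phiRevAux (replicate r E ++ z) = replicate r E ++ phiRevAux z := by
  induction r with
  | zero => rfl
  | succ r ih => rw [replicate_succ, cons_append, cons_append, phiRevAux_cons_E, ih]

lemma phiRevAux_append_swap {u : List Step} (hu : E ∉ u) {c : Step} (hc : c ≠ E)
    (y : List Step) : phiRevAux (u ++ c :: E :: y) = u ++ E :: c :: y := by
  induction u with
  | nil => cases c <;> simp_all [phiRevAux]
  | cons a u ih =>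
    obtain ⟨ha, hu⟩ := ne_and_not_mem_of_not_mem_cons hu
    rcases u with _ | ⟨b, u⟩
    · cases a <;> cases c <;> simp_all [phiRevAux]
    · have hb : b ≠ E := fun h => hu (h ▸ mem_cons_self)
      cases a <;> cases b <;> simp_all [phiRevAux]

lemma phiStep_swap (A : List Step) {c : Step} (hc : c ≠ E) {S' : List Step} (hS' : E ∉ S')
    (r : ℕ) : phiStep (A ++ E :: c :: (S' ++ replicate r E)) =
      A ++ c :: E :: (S' ++ replicate r E) := by
  have hS'rev : E ∉ S'.reverse := by rwa [mem_reverse]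
  simp only [phiStep, reverse_append, reverse_cons, reverse_replicate, append_assoc,
    cons_append, nil_append, phiRevAux_replicate_E_append]
  rw [phiRevAux_append_swap hS'rev hc]
  simp

def chainWord (G S S' : List Step) : List Step :=
  G ++ N :: (S ++ E :: (S' ++ replicate (cnt N S + cnt N S') E))

def IsChainWord (p : List Step) : Prop :=
  ∃ G S S', IsNED G ∧ E ∉ S ∧ E ∉ S' ∧ p = chainWord G S S'

lemma chainWord_cons_D (G S S' : List Step) :
    chainWord (D :: G) S S' = D :: chainWord G S S' := rfl

lemma chainWord_cons_NE (G S S' : List Step) :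
    chainWord (N :: E :: G) S S' = N :: E :: chainWord G S S' := rfl

lemma chainWord_cons_eq (G S S' : List Step) (c : Step) :
    chainWord G S (c :: S') =
      (G ++ N :: S) ++ E :: c :: (S' ++ replicate (cnt N S + cnt N (c :: S')) E) := by
  simp [chainWord]

lemma chainWord_append_singleton_eq (G S S' : List Step) (c : Step) :
    chainWord G (S ++ [c]) S' =
      (G ++ N :: S) ++ c :: E :: (S' ++ replicate (cnt N S + cnt N (c :: S')) E) := by
  have : cnt N (S ++ [c]) + cnt N S' = cnt N S + cnt N (c :: S') := by
    simp only [cnt, count_append, count_cons, count_nil]; omega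
  simp [chainWord, this]

lemma phiStep_chainWord (G S : List Step) {c : Step} (hc : c ≠ E) {S' : List Step}
    (hS' : E ∉ S') : phiStep (chainWord G S (c :: S')) = chainWord G (S ++ [c]) S' := by
  rw [chainWord_cons_eq, chainWord_append_singleton_eq, phiStep_swap _ hc hS']

lemma areaAux_zero_NED_append {G : List Step} (hG : IsNED G) (x : List Step) :
    areaAux 0 (G ++ x) = areaAux 0 x := by
  induction hG with
  | nil => rfl
  | ne _ ih => simpa [areaAux] using ih
  | d _ ih => simpa [areaAux] using ih

lemma area_of_NED {g : List Step} (hg : IsNED g) : area g = 0 := by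
  simpa [area, areaAux] using areaAux_zero_NED_append hg []

lemma areaAux_append_swap {X : List Step} (hX : E ∉ X) {c : Step} (hc : c ≠ E)
    (Y : List Step) {h : ℕ} (hh : 0 < h) :
    areaAux h (X ++ c :: E :: Y) = areaAux h (X ++ E :: c :: Y) + 1 := by
  induction X generalizing h with
  | nil =>
    obtain ⟨h, rfl⟩ := Nat.exists_eq_add_one.2 hh
    cases c <;> simp_all [areaAux] <;> omega
  | cons a X ih =>
    obtain ⟨ha, hX⟩ := ne_and_not_mem_of_not_mem_cons hX
    cases a <;> simp_all [areaAux] <;> omega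

lemma area_chainWord_step (G : List Step) {S : List Step} (hG : IsNED G) (hS : E ∉ S)
    {c : Step} (hc : c ≠ E) (S' : List Step) :
    area (chainWord G (S ++ [c]) S') = area (chainWord G S (c :: S')) + 1 := by
  rw [chainWord_cons_eq, chainWord_append_singleton_eq, area, area, append_assoc,
    append_assoc, areaAux_zero_NED_append hG, areaAux_zero_NED_append hG, cons_append,
    cons_append, areaAux, areaAux, areaAux_append_swap hS hc _ Nat.one_pos]
  rfl

section Bounce

variable (g w : List Step) (nn : ℕ)

lemma bounceAux_succ (f j : ℕ) :
    bounceAux g w nn (f + 1) j = dAfterE g (j + 1) +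
      (if nn ≤ nBefore w j ∨ nBefore w j ≤ j then 0
       else (nn - nBefore w j) + bounceAux g w nn f (nBefore w j)) := rfl

lemma bounceAux_fuel_congr :
    ∀ f₁ f₂ j, 0 < f₁ → 0 < f₂ → nn - j ≤ f₁ → nn - j ≤ f₂ →
      bounceAux g w nn f₁ j = bounceAux g w nn f₂ j := by
  intro f₁
  induction f₁ with
  | zero => intro _ _ h; omega
  | succ f₁ ih =>
    rintro (_ | f₂) j - hf₂ h₁ h₂
    · omega
    rw [bounceAux_succ _ _ _ f₁, bounceAux_succ _ _ _ f₂]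
    split_ifs with h
    · rfl
    · rw [ih f₂ _ (by omega) (by omega) (by omega) (by omega)]

lemma bounceAux_congr_dAfterE {g g' : List Step} (h : dAfterE g = dAfterE g') :
    ∀ f j, bounceAux g w nn f j = bounceAux g' w nn f j := by
  intro f
  induction f with
  | zero => intro j; rfl
  | succ f ih => intro j; simp only [bounceAux_succ, h, ih]

lemma bounceAux_cons_NE :
    ∀ f j, bounceAux (N :: E :: g) (N :: E :: w) (nn + 1) f (j + 1) = bounceAux g w nn f j := by
  intro f
  induction f with
  | zero => intro j; rfl
  | succ f ih =>
    intro j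
    have hn : nBefore (N :: E :: w) (j + 1) = nBefore w j + 1 := by
      simp [nBefore]; omega
    have hd : dAfterE (N :: E :: g) (j + 1 + 1) = dAfterE g (j + 1) := by
      simp [dAfterE]
    simp only [bounceAux_succ, hn, hd, ih]
    split_ifs <;> omega

end Bounce

lemma bounce_eq (g : List Step) :
    bounce g = if cnt E g = 0 then 0
      else bounceAux g (g.filter (· ≠ D)) (cnt E g) g.length 0 := by
  have : cnt E (g.filter (· ≠ D)) = cnt E g := by simp [cnt, count_filter]
  simp only [bounce, this]

lemma bounce_cons_D (g : List Step) : bounce (D :: g) = bounce g := by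
  rw [bounce_eq, bounce_eq]
  have hE : cnt E (D :: g) = cnt E g := by simp [cnt]
  have hfilter : (D :: g).filter (· ≠ D) = g.filter (· ≠ D) := by simp
  rw [hE, hfilter, bounceAux_congr_dAfterE (g := D :: g) (g' := g) _ _ (funext fun _ => rfl)]
  split_ifs with h
  · rfl
  · have : cnt E g ≤ g.length := count_le_length
    rw [length_cons]
    exact bounceAux_fuel_congr _ _ _ _ _ _ (by omega) (by omega) (by omega) (by omega)

lemma bounce_cons_NE (g : List Step) :
    bounce (N :: E :: g) = cnt D g + cnt E g + bounce g := by
  rw [bounce_eq, bounce_eq]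
  have hE : cnt E (N :: E :: g) = cnt E g + 1 := by simp [cnt]
  have hfilter : (N :: E :: g).filter (· ≠ D) = N :: E :: g.filter (· ≠ D) := by simp
  rw [hE, hfilter, if_neg (Nat.succ_ne_zero _), length_cons, length_cons, bounceAux_succ]
  have hn : nBefore (N :: E :: g.filter (· ≠ D)) 0 = 1 := by simp [nBefore]
  have hd : dAfterE (N :: E :: g) 1 = cnt D g := by simp [dAfterE]
  rw [hn, hd]
  rcases Nat.eq_zero_or_pos (cnt E g) with h | h
  · simp [h]
  · have : cnt E g ≤ g.length := count_le_length
    rw [if_neg (by omega), if_neg (by omega), bounceAux_cons_NE,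
      bounceAux_fuel_congr _ _ _ _ g.length 0 (by omega) (by omega) (by omega) (by omega)]
    omega

lemma length_eq_cnt_N_add_cnt_D {S : List Step} (hS : E ∉ S) :
    S.length = cnt N S + cnt D S := by
  induction S with
  | nil => rfl
  | cons a S ih =>
    obtain ⟨ha, hS⟩ := ne_and_not_mem_of_not_mem_cons hS
    cases a <;> simp_all [cnt] <;> omega

lemma filter_ne_D_eq_replicate {S : List Step} (hS : E ∉ S) :
    S.filter (· ≠ D) = replicate (cnt N S) N := by
  induction S with
  | nil => rfl
  | cons a S ih =>
    obtain ⟨ha, hS⟩ := ne_and_not_mem_of_not_mem_cons hS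
    cases a <;> simp_all [cnt, replicate_succ]

lemma dAfterE_append_of_E_not_mem {S : List Step} (hS : E ∉ S) (x : List Step) (e : ℕ) :
    dAfterE (S ++ x) e = dAfterE x e := by
  induction S with
  | nil => rfl
  | cons a S ih =>
    obtain ⟨ha, hS⟩ := ne_and_not_mem_of_not_mem_cons hS
    cases a <;> simp_all [dAfterE]

lemma nBefore_replicate_N_append (k : ℕ) (x : List Step) (j : ℕ) :
    nBefore (replicate k N ++ x) j = k + nBefore x j := by
  induction k with
  | zero => simp
  | succ k ih => simp [replicate_succ, nBefore, ih]; omega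

lemma nBefore_replicate_E (r j : ℕ) : nBefore (replicate r E) j = 0 := by
  induction r generalizing j with
  | zero => rfl
  | succ r ih => cases j <;> simp [replicate_succ, nBefore, ih]

lemma dAfterE_replicate_E (r e : ℕ) : dAfterE (replicate r E) e = 0 := by
  induction r generalizing e with
  | zero => rfl
  | succ r ih => simp [replicate_succ, dAfterE, cnt, count_replicate, ih]

lemma bounce_chainWord_nil {S S' : List Step} (hS : E ∉ S) (hS' : E ∉ S') :
    bounce (chainWord [] S S') = S'.length := by
  set α := cnt N S
  set β := cnt N S'
  have hw : (chainWord [] S S').filter (· ≠ D) =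
      N :: (replicate α N ++ E :: (replicate β N ++ replicate (α + β) E)) := by
    rw [chainWord, nil_append, filter_cons_of_pos (by decide), filter_append,
      filter_cons_of_pos (by decide), filter_append, filter_ne_D_eq_replicate hS,
      filter_ne_D_eq_replicate hS', filter_replicate_of_pos (by decide)]
  have hE : cnt E (chainWord [] S S') = α + β + 1 := by
    simp [chainWord, cnt, count_eq_zero.2 hS, count_eq_zero.2 hS', α, β]
  have hlen : (chainWord [] S S').length = S.length + S'.length + (α + β) + 1 + 1 := by
    simp [chainWord]; omega
  have hn₀ : nBefore (N :: (replicate α N ++ E :: (replicate β N ++ replicate (α + β) E))) 0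
      = α + 1 := by
    simp [nBefore, nBefore_replicate_N_append]; omega
  have hn₁ : nBefore (N :: (replicate α N ++ E :: (replicate β N ++ replicate (α + β) E)))
      (α + 1) = α + β + 1 := by
    simp [nBefore, nBefore_replicate_N_append, nBefore_replicate_E]; omega
  have hd₁ : dAfterE (chainWord [] S S') 1 = cnt D S' := by
    simp [chainWord, dAfterE, dAfterE_append_of_E_not_mem hS, cnt, count_replicate]
  have hd₂ : dAfterE (chainWord [] S S') (α + 2) = 0 := by
    simp [chainWord, dAfterE, dAfterE_append_of_E_not_mem hS, dAfterE_append_of_E_not_mem hS',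
      dAfterE_replicate_E]
  rw [bounce_eq, hE, if_neg (Nat.succ_ne_zero _), hw, hlen, bounceAux_succ, hn₀, hd₁]
  have := length_eq_cnt_N_add_cnt_D hS'
  split_ifs with h
  · omega
  · rw [bounceAux_succ, hn₁, if_pos (by omega), hd₂]
    omega

lemma chainWord_cons_perm (G S S' : List Step) (c : Step) :
    chainWord G S (c :: S') ~ chainWord G (S ++ [c]) S' := by
  rw [chainWord_cons_eq, chainWord_append_singleton_eq]
  exact (Perm.swap _ _ _).append_left _

lemma bounce_chainWord_step {G : List Step} (hG : IsNED G) {S : List Step} (hS : E ∉ S)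
    {c : Step} (hc : c ≠ E) {S' : List Step} (hS' : E ∉ S') :
    bounce (chainWord G S (c :: S')) = bounce (chainWord G (S ++ [c]) S') + 1 := by
  induction hG with
  | nil =>
    have hSc : E ∉ S ++ [c] := by simp [hS, hc.symm]
    rw [bounce_chainWord_nil hS (by simp [hc.symm, hS']), bounce_chainWord_nil hSc hS',
      length_cons]
  | d _ ih =>
    rw [chainWord_cons_D, chainWord_cons_D, bounce_cons_D, bounce_cons_D, ih]
  | @ne G _ ih =>
    have hperm := chainWord_cons_perm G S S' c
    rw [chainWord_cons_NE, chainWord_cons_NE, bounce_cons_NE, bounce_cons_NE, ih, cnt, cnt, cnt,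
      cnt, hperm.count_eq, hperm.count_eq]
    omega

lemma bounce_append_of_forall_eq_D {G : List Step} (hG : ∀ x ∈ G, x = D) (q : List Step) :
    bounce (G ++ q) = bounce q := by
  induction G with
  | nil => rfl
  | cons a G ih =>
    obtain rfl : a = D := hG a mem_cons_self
    rw [cons_append, bounce_cons_D, ih fun x hx => hG x (mem_cons_of_mem _ hx)]

lemma chainWord_nil_cases {G : List Step} (hG : IsNED G) {S : List Step} (hS : E ∉ S) :
    (∀ x ∈ G, x = D) ∨ ∃ G₂ S₂ S₂', IsNED G₂ ∧ E ∉ S₂ ∧ E ∉ S₂' ∧ S₂' ≠ [] ∧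
      chainWord G S [] = chainWord G₂ S₂ S₂' := by
  induction hG with
  | nil => simp
  | @d G _ ih =>
    rcases ih with hD | ⟨G₂, S₂, S₂', hG₂, hS₂, hS₂', hne, heq⟩
    · left; simpa using hD
    · exact .inr ⟨D :: G₂, S₂, S₂', hG₂.d, hS₂, hS₂', hne,
        by rw [chainWord_cons_D, heq]; rfl⟩
  | @ne G _ ih =>
    right
    rcases ih with hD | ⟨G₂, S₂, S₂', hG₂, hS₂, hS₂', hne, heq⟩
    · have hGE : E ∉ G := fun h => by simpa using hD E h
      have hGN : count N G = 0 := count_eq_zero.2 fun h => by simpa using hD N h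
      refine ⟨[], [], G ++ N :: S, .nil, not_mem_nil, by simp [hGE, hS], by simp, ?_⟩
      simp [chainWord, cnt, hGN, replicate_succ]
    · exact ⟨N :: E :: G₂, S₂, S₂', hG₂.ne, hS₂, hS₂', hne,
        by rw [chainWord_cons_NE, heq]; rfl⟩

lemma bounce_chainWord_of_forall_eq_D {G : List Step} (hG : ∀ x ∈ G, x = D)
    {S S' : List Step} (hS : E ∉ S) (hS' : E ∉ S') : bounce (chainWord G S S') = S'.length :=
  (bounce_append_of_forall_eq_D hG (chainWord [] S S')).trans (bounce_chainWord_nil hS hS')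

lemma IsChainWord.exists_ne_nil {p : List Step} (hp : IsChainWord p) (hb : 0 < bounce p) :
    ∃ G S S', IsNED G ∧ E ∉ S ∧ E ∉ S' ∧ S' ≠ [] ∧ p = chainWord G S S' := by
  obtain ⟨G, S, S', hG, hS, hS', rfl⟩ := hp
  rcases eq_or_ne S' [] with rfl | hne
  · rcases chainWord_nil_cases hG hS with hD | h
    · simp [bounce_chainWord_of_forall_eq_D hD hS hS'] at hb
    · exact h
  · exact ⟨G, S, S', hG, hS, hS', hne, rfl⟩

lemma IsChainWord.phiStep_spec {p : List Step} (hp : IsChainWord p) (hb : 0 < bounce p) :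
    IsChainWord (phiStep p) ∧ area (phiStep p) = area p + 1 ∧
      bounce (phiStep p) + 1 = bounce p ∧ (phiStep p).filter (· ≠ E) = p.filter (· ≠ E) := by
  obtain ⟨G, S, S', hG, hS, hS', hne, rfl⟩ := hp.exists_ne_nil hb
  obtain ⟨c, S', rfl⟩ := exists_cons_of_ne_nil hne
  obtain ⟨hEc, hS'⟩ := ne_and_not_mem_of_not_mem_cons hS'
  have hc : c ≠ E := hEc.symm
  rw [phiStep_chainWord G S hc hS']
  refine ⟨⟨G, S ++ [c], S', hG, by simp [hS, hEc], hS', rfl⟩,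
    area_chainWord_step G hG hS hc S', (bounce_chainWord_step hG hS hc hS').symm, ?_⟩
  simp [chainWord_cons_eq, chainWord_append_singleton_eq, hc]

lemma IsNED.forall_eq_D_or_isChainWord {g : List Step} (hg : IsNED g) :
    (∀ x ∈ g, x = D) ∨ IsChainWord g := by
  induction hg with
  | nil => simp
  | @d g _ ih =>
    rcases ih with hD | ⟨G, S, S', hG, hS, hS', rfl⟩
    · left; simpa using hD
    · exact .inr ⟨D :: G, S, S', hG.d, hS, hS', rfl⟩
  | @ne g _ ih =>
    right
    rcases ih with hD | ⟨G, S, S', hG, hS, hS', rfl⟩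
    · have hgE : E ∉ g := fun h => by simpa using hD E h
      have hgN : count N g = 0 := count_eq_zero.2 fun h => by simpa using hD N h
      exact ⟨[], [], g, .nil, not_mem_nil, hgE, by simp [chainWord, cnt, hgN]⟩
    · exact ⟨N :: E :: G, S, S', hG.ne, hS, hS', rfl⟩

lemma IsNED.iterate_phiStep {g : List Step} (hg : IsNED g) {i : ℕ} (hi : i ≤ bounce g) :
    area (phiStep^[i] g) = i ∧ bounce (phiStep^[i] g) + i = bounce g ∧
      (phiStep^[i] g).filter (· ≠ E) = g.filter (· ≠ E) ∧
      (0 < bounce (phiStep^[i] g) → IsChainWord (phiStep^[i] g)) := by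
  induction i with
  | zero =>
    refine ⟨area_of_NED hg, rfl, rfl, fun hb => ?_⟩
    refine hg.forall_eq_D_or_isChainWord.resolve_left fun hD => ?_
    have h0 : bounce g = 0 := by
      rw [← append_nil g]
      exact bounce_append_of_forall_eq_D hD []
    simp [h0] at hb
  | succ i ih =>
    obtain ⟨ha, hb, hf, hc⟩ := ih (by omega)
    obtain ⟨hc', ha', hb', hf'⟩ := (hc (by omega)).phiStep_spec (by omega)
    rw [Function.iterate_succ_apply']
    exact ⟨by omega, by omega, hf'.trans hf, fun _ => hc'⟩

def neBlocks : List Step → List Step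
  | [] => []
  | N :: t => N :: E :: neBlocks t
  | E :: t => neBlocks t
  | D :: t => D :: neBlocks t

lemma IsNED.neBlocks_filter {g : List Step} (hg : IsNED g) :
    neBlocks (g.filter (· ≠ E)) = g := by
  induction hg with
  | nil => rfl
  | ne _ ih => simpa [neBlocks] using ih
  | d _ ih => simpa [neBlocks] using ih

def omegaMap (p : List Step) : List Step :=
  phiStep^[bounce p] (neBlocks (p.filter (· ≠ E)))

lemma IsNED.omegaMap_iterate {g : List Step} (hg : IsNED g) {i : ℕ} (hi : i ≤ bounce g) :
    omegaMap (phiStep^[i] g) = phiStep^[bounce g - i] g := by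
  obtain ⟨-, hb, hf, -⟩ := hg.iterate_phiStep hi
  rw [omegaMap, hf, hg.neBlocks_filter, show bounce (phiStep^[i] g) = bounce g - i by omega]

lemma mem_phiSeq {g p : List Step} : p ∈ phiSeq g ↔ ∃ i ≤ bounce g, phiStep^[i] g = p := by
  simp only [phiSeq, mem_map, mem_range, Nat.lt_succ_iff]

lemma IsNED.omegaMap_of_mem_phiSeq {g p : List Step} (hg : IsNED g) (hp : p ∈ phiSeq g) :
    omegaMap p ∈ phiSeq g ∧ omegaMap (omegaMap p) = p ∧
      area p = bounce (omegaMap p) ∧ bounce p = area (omegaMap p) := by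
  obtain ⟨i, hi, rfl⟩ := mem_phiSeq.1 hp
  have hi' : bounce g - i ≤ bounce g := Nat.sub_le _ _
  obtain ⟨ha, hb, -, -⟩ := hg.iterate_phiStep hi
  obtain ⟨ha', hb', -, -⟩ := hg.iterate_phiStep hi'
  rw [hg.omegaMap_iterate hi, hg.omegaMap_iterate hi', Nat.sub_sub_self hi]
  exact ⟨mem_phiSeq.2 ⟨_, hi', rfl⟩, rfl, by omega, by omega⟩

/-- There is a bijection `Ω_n` of `φ({NE,D}^n) = ⋃_{γ ∈ {NE,D}^n} φ(γ)`
onto itself with `area(γ) = bounce(Ω_n(γ))` and `bounce(γ) = area(Ω_n(γ))`. -/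
theorem stmt7 (n : ℕ) :
    ∃ Ω : List Step → List Step,
      Set.BijOn Ω (phiUniv n) (phiUniv n) ∧
      ∀ p ∈ phiUniv n, area p = bounce (Ω p) ∧ bounce p = area (Ω p) := by
  have key : ∀ p ∈ phiUniv n, omegaMap p ∈ phiUniv n ∧ omegaMap (omegaMap p) = p ∧
      area p = bounce (omegaMap p) ∧ bounce p = area (omegaMap p) := by
    rintro p ⟨g, hg, hn, hp⟩
    obtain ⟨hmem, hinv, hstats⟩ := hg.omegaMap_of_mem_phiSeq hp
    exact ⟨⟨g, hg, hn, hmem⟩, hinv, hstats⟩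
  have hmaps : Set.MapsTo omegaMap (phiUniv n) (phiUniv n) := fun p hp => (key p hp).1
  have hinv : Set.InvOn omegaMap omegaMap (phiUniv n) (phiUniv n) :=
    ⟨fun p hp => (key p hp).2.1, fun p hp => (key p hp).2.1⟩
  exact ⟨omegaMap, hinv.bijOn hmaps hmaps, fun p hp => (key p hp).2.2⟩
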